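/- If H is the i-graph of some graph G, then for any k ≥ i(G) there exists a graph G* with i(G*) = k and ℐ(G*) ≅ H. In particular, adding ℓ = k − i(G) isolated vertices to G yields such a G*: X is an i-set of G iff X ∪ S is an i-set of G ∪ S (S the set of added isolated vertices), and this bijection preserves adjacency in the i-graphs. -/

import Mathlib

open Finset

variable {V : Type*}

/-- `S` is an independent dominating (equivalently, maximal independent) set of `G`. -/
def IndepDom (G : SimpleGraph V) (S : Finset V) : Prop :=
  (∀ ⦃x⦄, x ∈ S → ∀ ⦃y⦄, y ∈ S → ¬ G.Adj x y) ∧ ∀ v, v ∉ S → ∃ u ∈ S, G.Adj u v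

/-- The independent domination number `i(G)`. -/
noncomputable def iNum (G : SimpleGraph V) : ℕ :=
  sInf {n | ∃ S : Finset V, IndepDom G S ∧ S.card = n}

/-- An `i`-set: a maximal independent set of minimum cardinality. -/
def IsISet (G : SimpleGraph V) (S : Finset V) : Prop :=
  IndepDom G S ∧ S.card = iNum G

/-- The `i`-graph of `G`: vertices are the `i`-sets of `G`, two of them adjacent iff their
symmetric difference is a pair of adjacent vertices of `G`. -/
def iGraph (G : SimpleGraph V) [DecidableEq V] : SimpleGraph {S : Finset V // IsISet G S} where
  Adj X Y := ∃ x y, G.Adj x y ∧ symmDiff X.1 Y.1 = {x, y}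
  symm := by
    refine ⟨?_⟩
    rintro X Y ⟨x, y, hxy, h⟩
    exact ⟨x, y, hxy, by rwa [symmDiff_comm]⟩
  loopless := by
    refine ⟨?_⟩
    rintro X ⟨x, y, hxy, h⟩
    rw [symmDiff_self] at h
    exact (Finset.insert_ne_empty x {y}) (by simpa [eq_comm] using h)

/-- `G` together with `ℓ` added isolated vertices. -/
def addIso (G : SimpleGraph V) (ℓ : ℕ) : SimpleGraph (V ⊕ Fin ℓ) where
  Adj a b := match a, b with
    | Sum.inl a, Sum.inl b => G.Adj a b
    | _, Sum.inr _ => False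
    | Sum.inr _, _ => False
  symm := by refine ⟨?_⟩; rintro (a | i) (b | j) h
             · exact h.symm
             · exact h
             · exact h
             · exact h
  loopless := by refine ⟨?_⟩; rintro (a | i) h
                 · exact G.loopless.irrefl a h
                 · exact h

/-!
Adding isolated vertices forces them into every maximal independent set, so the independent
dominating sets of `G` plus `ℓ` isolated vertices are exactly the sets `X ∪ S` with `X`
independent dominating in `G`. Hence `i` grows by exactly `ℓ`, the `i`-sets correspond, and as
`(X ∪ S) ∆ (Y ∪ S) = X ∆ Y` the correspondence preserves `i`-graph adjacency.
-/

lemma Finset.image_inl_union_image_inr {α β : Type*} [DecidableEq α] [DecidableEq β]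
    (s : Finset α) (t : Finset β) :
    s.image Sum.inl ∪ t.image Sum.inr = s.disjSum t := by
  ext (x | x) <;> simp

lemma Finset.symmDiff_disjSum_disjSum {α β : Type*} [DecidableEq α] [DecidableEq β]
    (s t : Finset α) (u : Finset β) :
    symmDiff (s.disjSum u) (t.disjSum u) = (symmDiff s t).map Function.Embedding.inl := by
  ext (x | x) <;> simp [mem_symmDiff]

section IndependentDomination

variable {G : SimpleGraph V} {S : Finset V}

lemma IndepDom.iNum_le_card (h : IndepDom G S) : iNum G ≤ #S :=
  Nat.sInf_le ⟨S, h, rfl⟩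

lemma indepDom_of_maximal
    (hS : Maximal (fun T : Finset V => ∀ ⦃x⦄, x ∈ T → ∀ ⦃y⦄, y ∈ T → ¬ G.Adj x y) S) :
    IndepDom G S := by
  classical
  refine ⟨hS.prop, fun v hv => ?_⟩
  by_contra! hvS
  have hindep : ∀ ⦃x⦄, x ∈ insert v S → ∀ ⦃y⦄, y ∈ insert v S → ¬ G.Adj x y := by
    simp only [mem_insert]
    rintro x (rfl | hx) y (rfl | hy)
    · exact G.loopless.irrefl _
    · exact fun h => hvS y hy h.symm
    · exact hvS x hx
    · exact hS.prop hx hy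
  exact hv (hS.2 hindep (subset_insert v S) (mem_insert_self v S))

variable [Finite V]

lemma exists_indepDom (G : SimpleGraph V) : ∃ S, IndepDom G S := by
  obtain ⟨S, hS⟩ := (Set.toFinite {T : Finset V | ∀ ⦃x⦄, x ∈ T → ∀ ⦃y⦄, y ∈ T → ¬ G.Adj x y})
    |>.exists_maximal ⟨∅, by simp⟩
  exact ⟨S, indepDom_of_maximal hS⟩

lemma exists_indepDom_card_eq_iNum (G : SimpleGraph V) : ∃ S, IndepDom G S ∧ #S = iNum G := by
  obtain ⟨S, hS⟩ := exists_indepDom G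
  exact Nat.sInf_mem (s := {n | ∃ S : Finset V, IndepDom G S ∧ #S = n}) ⟨#S, S, hS, rfl⟩

end IndependentDomination

section AddIsolated

variable {G : SimpleGraph V} {ℓ : ℕ}

@[simp]
lemma addIso_adj_inl_inl {a b : V} : (addIso G ℓ).Adj (.inl a) (.inl b) ↔ G.Adj a b :=
  Iff.rfl

@[simp]
lemma not_addIso_adj_inr (a : V ⊕ Fin ℓ) (i : Fin ℓ) : ¬ (addIso G ℓ).Adj a (.inr i) := by
  cases a <;> exact id

@[simp]
lemma not_addIso_inr_adj (i : Fin ℓ) (a : V ⊕ Fin ℓ) : ¬ (addIso G ℓ).Adj (.inr i) a :=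
  fun h => not_addIso_adj_inr a i h.symm

lemma indepDom_addIso_disjSum_univ_iff {X : Finset V} :
    IndepDom (addIso G ℓ) (X.disjSum univ) ↔ IndepDom G X := by
  simp [IndepDom, Sum.forall, Sum.exists]

lemma IndepDom.inr_mem {T : Finset (V ⊕ Fin ℓ)} (hT : IndepDom (addIso G ℓ) T) (i : Fin ℓ) :
    .inr i ∈ T := by
  by_contra hi
  obtain ⟨u, -, hu⟩ := hT.2 _ hi
  exact not_addIso_adj_inr u i hu

lemma IndepDom.eq_toLeft_disjSum_univ {T : Finset (V ⊕ Fin ℓ)}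
    (hT : IndepDom (addIso G ℓ) T) : T = T.toLeft.disjSum univ :=
  eq_disjSum_iff.2 ⟨rfl, eq_univ_of_forall fun i => mem_toRight.2 (hT.inr_mem i)⟩

lemma IndepDom.of_addIso {T : Finset (V ⊕ Fin ℓ)} (hT : IndepDom (addIso G ℓ) T) :
    IndepDom G T.toLeft :=
  indepDom_addIso_disjSum_univ_iff.1 (hT.eq_toLeft_disjSum_univ ▸ hT)

lemma iNum_addIso [Finite V] (G : SimpleGraph V) (ℓ : ℕ) : iNum (addIso G ℓ) = iNum G + ℓ := by
  obtain ⟨S, hS, hScard⟩ := exists_indepDom_card_eq_iNum G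
  obtain ⟨T, hT, hTcard⟩ := exists_indepDom_card_eq_iNum (addIso G ℓ)
  have hle : iNum (addIso G ℓ) ≤ iNum G + ℓ := by
    simpa [card_disjSum, hScard] using
      (indepDom_addIso_disjSum_univ_iff (ℓ := ℓ).2 hS).iNum_le_card
  have hge : iNum G + ℓ ≤ iNum (addIso G ℓ) := by
    rw [← hTcard, hT.eq_toLeft_disjSum_univ, card_disjSum, card_univ, Fintype.card_fin]
    exact Nat.add_le_add_right hT.of_addIso.iNum_le_card ℓ
  exact le_antisymm hle hge

lemma isISet_addIso_disjSum_univ_iff [Finite V] {X : Finset V} :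
    IsISet (addIso G ℓ) (X.disjSum univ) ↔ IsISet G X := by
  simp [IsISet, indepDom_addIso_disjSum_univ_iff, iNum_addIso, card_disjSum]

lemma IsISet.of_addIso [Finite V] {T : Finset (V ⊕ Fin ℓ)} (hT : IsISet (addIso G ℓ) T) :
    IsISet G T.toLeft :=
  isISet_addIso_disjSum_univ_iff.1 (hT.1.eq_toLeft_disjSum_univ ▸ hT)

variable [DecidableEq V]

lemma iGraph_addIso_adj_iff {X Y : {T : Finset (V ⊕ Fin ℓ) // IsISet (addIso G ℓ) T}} :
    (iGraph (addIso G ℓ)).Adj X Y ↔ ∃ x y, G.Adj x y ∧ symmDiff X.1.toLeft Y.1.toLeft = {x, y} := by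
  change (∃ a b, _ ∧ _) ↔ _
  rw [X.2.1.eq_toLeft_disjSum_univ, Y.2.1.eq_toLeft_disjSum_univ, symmDiff_disjSum_disjSum,
    toLeft_disjSum, toLeft_disjSum]
  constructor
  · rintro ⟨a | i, b | j, hab, hXY⟩
    · refine ⟨a, b, hab, map_injective (Function.Embedding.inl (β := Fin ℓ)) ?_⟩
      simpa using hXY
    all_goals simp at hab
  · rintro ⟨x, y, hxy, hXY⟩
    exact ⟨.inl x, .inl y, hxy, by simp [hXY]⟩

noncomputable def iGraphAddIsoIso [Finite V] (G : SimpleGraph V) (ℓ : ℕ) :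
    iGraph (addIso G ℓ) ≃g iGraph G where
  toFun T := ⟨T.1.toLeft, T.2.of_addIso⟩
  invFun X := ⟨X.1.disjSum univ, isISet_addIso_disjSum_univ_iff.2 X.2⟩
  left_inv T := Subtype.ext T.2.1.eq_toLeft_disjSum_univ.symm
  right_inv _ := Subtype.ext toLeft_disjSum
  map_rel_iff' := iGraph_addIso_adj_iff.symm

end AddIsolated

/-- The Inflation Lemma: for any `k ≥ i(G)` there is a graph `G*` with `i(G*) = k` and the
same `i`-graph; indeed adding `ℓ = k − i(G)` isolated vertices `S` works: `X` is an `i`-set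
of `G` iff `X ∪ S` is an `i`-set of `G*`, and this bijection preserves adjacency. -/
theorem inflation_lemma {V : Type} [Fintype V] [DecidableEq V] (G : SimpleGraph V)
    (k : ℕ) (hk : iNum G ≤ k) :
    (∃ (W : Type) (_ : Fintype W) (_ : DecidableEq W) (G' : SimpleGraph W),
       iNum G' = k ∧ Nonempty (iGraph G' ≃g iGraph G)) ∧
    iNum (addIso G (k - iNum G)) = k ∧
    (∀ X : Finset V, IsISet G X ↔
       IsISet (addIso G (k - iNum G)) (X.image Sum.inl ∪ Finset.univ.image Sum.inr)) ∧
    (∀ (X Y : {S : Finset V // IsISet G S})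
       (hX : IsISet (addIso G (k - iNum G)) (X.1.image Sum.inl ∪ Finset.univ.image Sum.inr))
       (hY : IsISet (addIso G (k - iNum G)) (Y.1.image Sum.inl ∪ Finset.univ.image Sum.inr)),
       (iGraph G).Adj X Y ↔
         (iGraph (addIso G (k - iNum G))).Adj ⟨_, hX⟩ ⟨_, hY⟩) := by
  set ℓ := k - iNum G
  have hiNum : iNum (addIso G ℓ) = k := by rw [iNum_addIso]; omega
  simp only [image_inl_union_image_inr]
  refine ⟨⟨V ⊕ Fin ℓ, inferInstance, inferInstance, addIso G ℓ, hiNum,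
    ⟨iGraphAddIsoIso G ℓ⟩⟩, hiNum, fun _ => isISet_addIso_disjSum_univ_iff.symm,
    fun X Y hX hY => ?_⟩
  rw [iGraph_addIso_adj_iff, toLeft_disjSum, toLeft_disjSum]
  rfl
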